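/- arXiv:1802.04669 — 7 statements merged into one kernel-verified Lean document; each statement's English description precedes it below -/
import Mathlib

section
/- For the recursively defined polynomials f_T(X) = X and f_{t-1}(X) = f_t(X) - n_t·f_t'(X)·X(1-X), each f_t is a polynomial of degree T+1-t with leading coefficient (T-t)!·∏_{s=t+1}^T n_s. -/
/-!
Subtracting `c · g' · X(1 - X)` from a polynomial `g` of degree `d ≥ 1` raises the degree by one:
the subtracted term has degree `(d - 1) + 2` and leading coefficient `-c · d · lc g`, so it
dominates `g`. Descending from `f_T = X`, each step multiplies the leading coefficient by
`n_t · deg f_t`, which accumulates to `(T - t)! · ∏ n_s`.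
-/

namespace Polynomial

section Ring

variable {R : Type*} [Ring R] [Nontrivial R]

theorem natDegree_X_mul_one_sub_X : (X * (1 - X) : R[X]).natDegree = 2 := by
  rw [mul_one_sub, ← pow_two]
  compute_degree!

theorem leadingCoeff_X_mul_one_sub_X : (X * (1 - X) : R[X]).leadingCoeff = -1 := by
  rw [leadingCoeff, natDegree_X_mul_one_sub_X, mul_one_sub, ← pow_two]
  simp [coeff_X]

end Ring

section Domain

variable {R : Type*} [CommRing R] [IsDomain R] [CharZero R] {g : R[X]} {c : R}

theorem natDegree_C_mul_derivative_mul_X_mul_one_sub_X (hc : c ≠ 0) (hg : g.natDegree ≠ 0) :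
    (C c * derivative g * (X * (1 - X))).natDegree = g.natDegree + 1 := by
  have hq : (X * (1 - X) : R[X]) ≠ 0 :=
    ne_zero_of_natDegree_gt (natDegree_X_mul_one_sub_X (R := R) ▸ two_pos)
  rw [natDegree_mul (by simpa [hc] using hg) hq, natDegree_C_mul hc, natDegree_derivative,
    natDegree_X_mul_one_sub_X]
  omega

theorem leadingCoeff_C_mul_derivative_mul_X_mul_one_sub_X :
    (C c * derivative g * (X * (1 - X))).leadingCoeff = -(c * g.natDegree * g.leadingCoeff) := by
  rw [leadingCoeff_mul, leadingCoeff_mul, leadingCoeff_C, leadingCoeff_derivative,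
    leadingCoeff_X_mul_one_sub_X]
  ring

theorem natDegree_sub_C_mul_derivative_mul_X_mul_one_sub_X (hc : c ≠ 0) (hg : g.natDegree ≠ 0) :
    (g - C c * derivative g * (X * (1 - X))).natDegree = g.natDegree + 1 := by
  have hdeg := natDegree_C_mul_derivative_mul_X_mul_one_sub_X hc hg
  rw [natDegree_sub_eq_right_of_natDegree_lt (by omega), hdeg]

theorem leadingCoeff_sub_C_mul_derivative_mul_X_mul_one_sub_X (hc : c ≠ 0)
    (hg : g.natDegree ≠ 0) :
    (g - C c * derivative g * (X * (1 - X))).leadingCoeff = c * g.natDegree * g.leadingCoeff := by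
  have hdeg := natDegree_C_mul_derivative_mul_X_mul_one_sub_X hc hg
  rw [leadingCoeff_sub_of_degree_lt' (degree_lt_degree (by omega)),
    leadingCoeff_C_mul_derivative_mul_X_mul_one_sub_X, neg_neg]

end Domain

end Polynomial

open Polynomial in
/-- For the recursively defined polynomials `f_T = X`,
`f_{t-1} = f_t - n_t · f_t' · X(1-X)`, each `f_t` has degree `T+1-t` and
leading coefficient `(T-t)! · ∏_{s=t+1}^T n_s`. -/
theorem stmt_3 (T : ℕ) (n : ℕ → ℕ) (hn : ∀ t, 1 ≤ t → t ≤ T → 0 < n t)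
    (f : ℕ → Polynomial ℝ) (hT : f T = X)
    (hrec : ∀ t, 1 ≤ t → t ≤ T →
      f (t-1) = f t - C (n t : ℝ) * derivative (f t) * (X * (1 - X)))
    (t : ℕ) (ht : t ≤ T) :
    (f t).natDegree = T + 1 - t ∧
    (f t).leadingCoeff = (Nat.factorial (T - t) : ℝ) * ∏ s ∈ Finset.Icc (t+1) T, (n s : ℝ) := by
  induction ht using Nat.decreasingInduction with
  | self => simp [hT]
  | of_succ t ht ih =>
    obtain ⟨hdeg, hlc⟩ := ih
    have hc : (n (t + 1) : ℝ) ≠ 0 := by exact_mod_cast (hn (t + 1) (by omega) ht).ne'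
    have hg : (f (t + 1)).natDegree ≠ 0 := by omega
    have hstep : f t = f (t + 1) - C (n (t + 1) : ℝ) * derivative (f (t + 1)) * (X * (1 - X)) :=
      hrec (t + 1) (by omega) ht
    rw [hstep, natDegree_sub_C_mul_derivative_mul_X_mul_one_sub_X hc hg,
      leadingCoeff_sub_C_mul_derivative_mul_X_mul_one_sub_X hc hg, hdeg, hlc,
      ← Finset.mul_prod_Ioc_eq_prod_Icc (by omega : t + 1 ≤ T), Finset.Icc_add_one_left_eq_Ioc,
      Nat.add_sub_add_right, show T - t = T - (t + 1) + 1 by omega, Nat.factorial_succ]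
    refine ⟨by omega, ?_⟩
    push_cast
    ring
end

section
/- With g(X) = X(1-X), g_1 = g, and g_{k+1}(X) = -g_k'(X)·g(X), for the fully sequential n-player contest (n_t = 1 for all t, T = n) the recursively defined f_{n-k} satisfies f_{n-k}(X)·(1-X) = g_k(X)·X for all k = 1,...,n and all X. -/
/-- For the fully sequential `n`-player Tullock contest with `f_n(X) = X`,
`f_{t-1}(X) = f_t(X) - f_t'(X)·X(1-X)`, and `g₁(X) = X(1-X)`,
`g_{k+1}(X) = -g_k'(X)·g₁(X)`, we have `f_{n-k}(X)·(1-X) = g_k(X)·X`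
for all `k = 1,…,n` and all `X`. -/
theorem stmt_6 (nn : ℕ) (f g : ℕ → ℝ → ℝ)
    (hfn : ∀ X : ℝ, f nn X = X)
    (hfrec : ∀ t, 1 ≤ t → t ≤ nn → ∀ X : ℝ,
      f (t-1) X = f t X - deriv (f t) X * (X * (1 - X)))
    (hg1 : ∀ X : ℝ, g 1 X = X * (1 - X))
    (hgrec : ∀ k, 1 ≤ k → ∀ X : ℝ, g (k+1) X = -deriv (g k) X * (X * (1 - X)))
    (k : ℕ) (hk1 : 1 ≤ k) (hkn : k ≤ nn) :
    ∀ X : ℝ, f (nn - k) X * (1 - X) = g k X * X := by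
  -- Strengthened claim: both g k and f (nn-k) are polynomials with the
  -- required relation.
  suffices H : ∀ k, 1 ≤ k → k ≤ nn →
      ∃ p q : Polynomial ℝ, (∀ X, g k X = p.eval X) ∧ (∀ X, f (nn - k) X = q.eval X) ∧
        q * (1 - Polynomial.X) = p * Polynomial.X by
    obtain ⟨p, q, hp, hq, hrel⟩ := H k hk1 hkn
    intro X
    have := congrArg (Polynomial.eval X) hrel
    simp only [hp, hq]
    simpa using this
  intro k hk1
  induction k, hk1 using Nat.le_induction with
  | base =>
    intro h1n
    have hfid : f nn = fun X => X := funext hfn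
    refine ⟨Polynomial.X - Polynomial.X ^ 2, Polynomial.X ^ 2, ?_, ?_, by ring⟩
    · intro X; simp [hg1 X]; ring
    · intro X
      have := hfrec nn h1n le_rfl X
      rw [hfid] at this
      simp at this
      rw [this]
      simp only [Polynomial.eval_pow, Polynomial.eval_X]
      ring
  | succ k hk IH =>
    intro hkn1
    obtain ⟨p, q, hp, hq, hrel⟩ := IH (le_trans (Nat.le_succ k) hkn1)
    have hgk : g k = fun X => p.eval X := funext hp
    have hfk : f (nn - k) = fun X => q.eval X := funext hq
    -- derivative relation
    have hder : Polynomial.derivative (q * (1 - Polynomial.X))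
        = Polynomial.derivative (p * Polynomial.X) := by rw [hrel]
    simp [Polynomial.derivative_mul] at hder
    refine ⟨-Polynomial.derivative p * (Polynomial.X - Polynomial.X ^ 2),
      q - Polynomial.derivative q * (Polynomial.X - Polynomial.X ^ 2), ?_, ?_, ?_⟩
    · intro X
      rw [hgrec k hk X, hgk]
      simp only [Polynomial.deriv, Polynomial.eval_mul, Polynomial.eval_neg,
        Polynomial.eval_sub, Polynomial.eval_pow, Polynomial.eval_X]
      ring
    · intro X
      have h1 : 1 ≤ nn - k := by omega
      have h2 : nn - k ≤ nn := Nat.sub_le nn k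
      have := hfrec (nn - k) h1 h2 X
      have hsub : nn - (k + 1) = nn - k - 1 := by omega
      rw [hsub, this, hfk]
      simp only [Polynomial.deriv, Polynomial.eval_mul, Polynomial.eval_neg,
        Polynomial.eval_sub, Polynomial.eval_pow, Polynomial.eval_X]
      ring
    · linear_combination (1 - Polynomial.X) * hrel
        - Polynomial.X * (1 - Polynomial.X) * hder
end

section
/- Define f_T(X) = X and f_{t-1}(X) = f_t(X) - n_t·f_t'(X)·g(X) where g is a polynomial, and define g_1 = g, g_{k+1} = -g_k'·g. Then f_t(X) = X - ∑_{k=1}^{T-t} S_k(n_{t+1},...,n_T)·g_k(X), where S_k denotes the k-th elementary symmetric polynomial. -/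
/-! Write `s` for `(n_{t+2}, …, n_T)`. Since `-g_k' g = g_{k+1}`, differentiating
`X - ∑_{k ≥ 1} S_k(s) g_k` and multiplying by `g` gives `∑_{k ≥ 0} S_k(s) g_{k+1}`. One step of the
recursion for `f` therefore adds `n_{t+1} S_{k-1}(s)` to the coefficient of `g_k`, which is exactly
the recursion `S_k(n_{t+1}, s) = S_k(s) + n_{t+1} S_{k-1}(s)` of the elementary symmetric
polynomials. -/

open Polynomial Finset

namespace Multiset

variable {R : Type*} [CommSemiring R]

theorem esymm_zero (s : Multiset R) : s.esymm 0 = 1 := by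
  simp [esymm]

theorem esymm_eq_zero_of_card_lt {s : Multiset R} {k : ℕ} (h : card s < k) : s.esymm k = 0 := by
  simp [esymm, powersetCard_eq_empty _ h]

theorem esymm_cons_add_one (a : R) (s : Multiset R) (k : ℕ) :
    (a ::ₘ s).esymm (k + 1) = s.esymm (k + 1) + a * s.esymm k := by
  simp only [esymm, powersetCard_cons, map_add, sum_add, map_map, Function.comp_def, prod_cons,
    sum_map_mul_left]

end Multiset

theorem Finset.sum_Icc_one_eq_sum_range {M : Type*} [AddCommMonoid M] (f : ℕ → M) (N : ℕ) :
    ∑ k ∈ Icc 1 N, f k = ∑ k ∈ range N, f (k + 1) := by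
  rw [range_eq_Ico, sum_Ico_add', zero_add, Ico_add_one_right_eq_Icc]

section

variable {R : Type*} [CommRing R] {g : R[X]} {gk : ℕ → R[X]}

variable (gk) in
/-- The closed form claimed for `f_t`, evaluated at `s = (n_{t+1}, …, n_T)`. -/
noncomputable def esymmExpansion (s : Multiset R) : R[X] :=
  X - ∑ k ∈ Icc 1 (Multiset.card s), C (s.esymm k) * gk k

variable (hg1 : gk 1 = g) (hgrec : ∀ k, 1 ≤ k → gk (k + 1) = -derivative (gk k) * g)
include hg1 hgrec

theorem derivative_esymmExpansion_mul (s : Multiset R) :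
    derivative (esymmExpansion gk s) * g =
      ∑ k ∈ range (Multiset.card s + 1), C (s.esymm k) * gk (k + 1) := by
  have hneg (k : ℕ) : -(C (s.esymm (k + 1)) * derivative (gk (k + 1)) * g) =
      C (s.esymm (k + 1)) * gk (k + 1 + 1) := by
    rw [hgrec (k + 1) (Nat.le_add_left 1 k)]; ring
  rw [sum_range_succ', Multiset.esymm_zero, C_1, one_mul, zero_add, hg1, esymmExpansion,
    sum_Icc_one_eq_sum_range, derivative_sub, derivative_X, derivative_sum, sub_mul,
    one_mul, sum_mul, sub_eq_neg_add, ← sum_neg_distrib]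
  simp only [derivative_C_mul, hneg]

theorem esymmExpansion_cons (a : R) (s : Multiset R) :
    esymmExpansion gk (a ::ₘ s) =
      esymmExpansion gk s - C a * derivative (esymmExpansion gk s) * g := by
  rw [mul_assoc, derivative_esymmExpansion_mul hg1 hgrec, esymmExpansion, esymmExpansion,
    Multiset.card_cons, sum_Icc_one_eq_sum_range, sum_Icc_one_eq_sum_range, mul_sum]
  simp only [Multiset.esymm_cons_add_one, map_add, map_mul, add_mul, sum_add_distrib, mul_assoc]
  rw [sum_range_succ _ (Multiset.card s), Multiset.esymm_eq_zero_of_card_lt (lt_add_one _), C_0,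
    zero_mul, add_zero, sub_add_eq_sub_sub]

end

open Polynomial in
theorem stmt_9_general (T : ℕ) (n : ℕ → ℝ)
    (g : Polynomial ℝ) (f gk : ℕ → Polynomial ℝ)
    (hT : f T = X)
    (hfrec : ∀ t, 1 ≤ t → t ≤ T →
      f (t-1) = f t - C (n t) * derivative (f t) * g)
    (hg1 : gk 1 = g)
    (hgrec : ∀ k, 1 ≤ k → gk (k+1) = -derivative (gk k) * g)
    (t : ℕ) (ht : t ≤ T) :
    f t = X - ∑ k ∈ Finset.Icc 1 (T - t),
      C (((Finset.Icc (t+1) T).val.map n).esymm k) * gk k := by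
  suffices f t = esymmExpansion gk ((Icc (t + 1) T).val.map n) by simpa [esymmExpansion] using this
  induction ht using Nat.decreasingInduction with
  | self => simp [esymmExpansion, hT]
  | of_succ t ht ih =>
    rw [← insert_Icc_add_one_left_eq_Icc ht, insert_val_of_notMem (by simp), Multiset.map_cons,
      esymmExpansion_cons hg1 hgrec, ← ih]
    simpa using hfrec (t + 1) (Nat.le_add_left 1 t) ht

open Polynomial in
/-- With `f_T = X`, `f_{t-1} = f_t - n_t·f_t'·g` for a polynomial `g`, and
`g₁ = g`, `g_{k+1} = -g_k'·g`, each `f_t` satisfies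
`f_t = X - ∑_{k=1}^{T-t} S_k(n_{t+1},…,n_T)·g_k`, where `S_k` is the `k`-th
elementary symmetric polynomial. -/
theorem stmt_9 (T : ℕ) (n : ℕ → ℝ) (hn : ∀ t, 1 ≤ t → t ≤ T → 0 < n t)
    (g : Polynomial ℝ) (f gk : ℕ → Polynomial ℝ)
    (hT : f T = X)
    (hfrec : ∀ t, 1 ≤ t → t ≤ T →
      f (t-1) = f t - C (n t) * derivative (f t) * g)
    (hg1 : gk 1 = g)
    (hgrec : ∀ k, 1 ≤ k → gk (k+1) = -derivative (gk k) * g)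
    (t : ℕ) (ht : t ≤ T) :
    f t = X - ∑ k ∈ Finset.Icc 1 (T - t),
      C (((Finset.Icc (t+1) T).val.map n).esymm k) * gk k :=
  stmt_9_general T n g f gk hT hfrec hg1 hgrec t ht
end

section
/- For the fully sequential five-player Tullock contest, f_0(X) = 120X⁶ - 240X⁵ + 150X⁴ - 30X³ + X², and its largest root in [0,1] equals 1/2 + (1/2)·√(1/2 + √7/(2√15)). -/
/-!
Each step `f ↦ f - f' · X(1 - X)` maps polynomial functions to polynomial functions, so `f₀` is
the fivefold iterate of that step on `X`. Writing `u = (X - 1/2)²` and `s = √(7/60)`,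
`f₀ = 120 X² (u - (1/2 + s)/4)(u - (1/2 - s)/4)`; its largest root is where `u = (1/2 + s)/4`,
and beyond that point every factor is positive.
-/

open Polynomial

noncomputable def tullockStep {R : Type*} [CommRing R] (p : R[X]) : R[X] :=
  p - derivative p * (X * (1 - X))

theorem tullockStep_iterate_five_X :
    tullockStep^[5] (X : ℝ[X]) = 120*X^6 - 240*X^5 + 150*X^4 - 30*X^3 + X^2 := by
  simp only [Function.iterate_succ', Function.iterate_zero, Function.comp_apply, id, tullockStep,
    derivative_mul, derivative_sub, derivative_add, derivative_X, derivative_one, map_zero]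
  ring

theorem eval_tullockStep_of_eq_eval {f g : ℝ → ℝ} {p : ℝ[X]} (hf : ∀ x, f x = p.eval x)
    (hg : ∀ x, g x = f x - deriv f x * (x * (1 - x))) (x : ℝ) :
    g x = (tullockStep p).eval x := by
  obtain rfl : f = fun x => p.eval x := funext hf
  simp [hg, tullockStep, Polynomial.deriv]

theorem eq_eval_tullockStep_iterate {f : ℕ → ℝ → ℝ} {n : ℕ} {p : ℝ[X]}
    (hn : ∀ x, f n x = p.eval x)
    (hrec : ∀ t, 1 ≤ t → t ≤ n → ∀ x, f (t - 1) x = f t x - deriv (f t) x * (x * (1 - x))) :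
    ∀ k ≤ n, ∀ x, f (n - k) x = (tullockStep^[k] p).eval x
  | 0, _ => hn
  | k + 1, hk => by
    rw [Function.iterate_succ_apply', show n - (k + 1) = n - k - 1 by omega]
    exact eval_tullockStep_of_eq_eval (eq_eval_tullockStep_iterate hn hrec k (by omega))
      (hrec (n - k) (by omega) (by omega))

theorem sextic_eq_mul {s : ℝ} (hs : s ^ 2 = 7 / 60) (x : ℝ) :
    120*x^6 - 240*x^5 + 150*x^4 - 30*x^3 + x^2 =
      120 * x ^ 2 * ((x - 1/2) ^ 2 - (1/2 + s) / 4) * ((x - 1/2) ^ 2 - (1/2 - s) / 4) := by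
  linear_combination (15/2 * x ^ 2) * hs

theorem isGreatest_sextic_roots {s : ℝ} (hs0 : 0 ≤ s) (hs : s ^ 2 = 7 / 60) :
    IsGreatest {x : ℝ | x ∈ Set.Icc (0:ℝ) 1 ∧ 120*x^6 - 240*x^5 + 150*x^4 - 30*x^3 + x^2 = 0}
      (1/2 + (1/2) * √(1/2 + s)) := by
  have hs1 : s ≤ 1/2 := by nlinarith
  set w := √(1/2 + s)
  have hw0 : 0 ≤ w := Real.sqrt_nonneg _
  have hw2 : w ^ 2 = 1/2 + s := Real.sq_sqrt (by linarith)
  have hw1 : w ≤ 1 := by nlinarith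
  refine ⟨⟨⟨by linarith, by linarith⟩, ?_⟩, ?_⟩
  · rw [sextic_eq_mul hs]
    linear_combination (30 * (1/2 + 1/2 * w) ^ 2 * ((w/2) ^ 2 - (1/2 - s)/4)) * hw2
  · rintro x ⟨-, hx⟩
    by_contra! hlt
    have h₁ : (1/2 + s) / 4 < (x - 1/2) ^ 2 := by nlinarith
    have h₂ : 0 < 120 * x ^ 2 * ((x - 1/2) ^ 2 - (1/2 + s) / 4) * ((x - 1/2) ^ 2 - (1/2 - s) / 4) := by
      have : 0 < x := by linarith
      have : (1/2 - s) / 4 < (x - 1/2) ^ 2 := by linarith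
      apply mul_pos (mul_pos (by positivity) (by linarith)) (by linarith)
    rw [sextic_eq_mul hs] at hx
    linarith

theorem sqrt_seven_div_two_sqrt_fifteen_sq : (√7 / (2 * √15)) ^ 2 = 7 / 60 := by
  rw [div_pow, mul_pow, Real.sq_sqrt (by norm_num), Real.sq_sqrt (by norm_num)]
  norm_num

/-- For the fully sequential five-player Tullock contest with `f₅(X) = X` and
`f_{t-1}(X) = f_t(X) - f_t'(X)·X(1-X)`, one has
`f₀(X) = 120X⁶ - 240X⁵ + 150X⁴ - 30X³ + X²`, and the largest root of `f₀` in
`[0,1]` equals `1/2 + (1/2)·√(1/2 + √7/(2√15))`. -/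
theorem stmt_12 (f : ℕ → ℝ → ℝ)
    (h5 : ∀ X : ℝ, f 5 X = X)
    (hrec : ∀ t, 1 ≤ t → t ≤ 5 → ∀ X : ℝ,
      f (t-1) X = f t X - deriv (f t) X * (X * (1 - X))) :
    (∀ X : ℝ, f 0 X = 120*X^6 - 240*X^5 + 150*X^4 - 30*X^3 + X^2) ∧
    IsGreatest {X : ℝ | X ∈ Set.Icc (0:ℝ) 1 ∧ f 0 X = 0}
      (1/2 + (1/2) * Real.sqrt (1/2 + Real.sqrt 7 / (2 * Real.sqrt 15))) := by
  have hf0 (x : ℝ) : f 0 x = 120*x^6 - 240*x^5 + 150*x^4 - 30*x^3 + x^2 := by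
    simpa [tullockStep_iterate_five_X] using
      eq_eval_tullockStep_iterate (p := X) (by simpa using h5) hrec 5 le_rfl x
  refine ⟨hf0, ?_⟩
  simp_rw [hf0]
  exact isGreatest_sextic_roots (by positivity) sqrt_seven_div_two_sqrt_fifteen_sq
end

section
/- The polynomial P(X) = 552X⁵ - 828X⁴ + 322X³ - 23X² - 1 is irreducible over ℚ. -/
/-!
Reversing the coefficients of `P` and changing sign gives `X⁵ + 23X³ - 322X² + 828X - 552`,
which is Eisenstein at `23` (note `322 = 14·23`, `828 = 36·23`, `552 = 24·23`), hence irreducible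
over `ℤ` and, being monic, over `ℚ` by Gauss's lemma. Over a domain `mirror` is a multiplicative
involution that fixes the (constant) units, so it preserves irreducibility.
-/

open Polynomial

namespace Polynomial

variable {R : Type*} [CommRing R] [IsDomain R]

theorem isUnit_mirror_iff {p : R[X]} : IsUnit p.mirror ↔ IsUnit p := by
  refine ⟨fun h => ?_, fun h => ?_⟩
  · obtain ⟨r, hr, hrp⟩ := isUnit_iff.mp h
    rw [← p.mirror_mirror, ← hrp, mirror_C]
    exact isUnit_C.mpr hr
  · obtain ⟨r, hr, rfl⟩ := isUnit_iff.mp h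
    rw [mirror_C]
    exact isUnit_C.mpr hr

theorem Irreducible.mirror {p : R[X]} (hp : Irreducible p) : Irreducible p.mirror where
  not_isUnit h := hp.not_isUnit (isUnit_mirror_iff.mp h)
  isUnit_or_isUnit a b hab := by
    rw [← isUnit_mirror_iff (p := a), ← isUnit_mirror_iff (p := b)]
    exact hp.isUnit_or_isUnit (by rw [← mirror_mul_of_domain, ← hab, mirror_mirror])

end Polynomial

noncomputable def reversedQuintic (R : Type*) [CommRing R] : R[X] :=
  X ^ 5 + C 23 * X ^ 3 - C 322 * X ^ 2 + C 828 * X - C 552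

theorem natDegree_reversedQuintic (R : Type*) [CommRing R] [Nontrivial R] :
    (reversedQuintic R).natDegree = 5 := by
  unfold reversedQuintic; compute_degree!

theorem monic_reversedQuintic (R : Type*) [CommRing R] : (reversedQuintic R).Monic := by
  unfold reversedQuintic; monicity!

theorem isEisensteinAt_reversedQuintic :
    (reversedQuintic ℤ).IsEisensteinAt (Ideal.span {23}) where
  leading := by
    rw [(monic_reversedQuintic ℤ).leadingCoeff, Ideal.mem_span_singleton]
    decide
  mem {n} hn := by
    rw [natDegree_reversedQuintic] at hn
    rw [Ideal.mem_span_singleton]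
    interval_cases n <;> simp [reversedQuintic, coeff_X, coeff_X_pow]
  notMem := by
    rw [Ideal.span_singleton_pow, Ideal.mem_span_singleton]
    simp [reversedQuintic]

theorem irreducible_reversedQuintic_int : Irreducible (reversedQuintic ℤ) :=
  isEisensteinAt_reversedQuintic.irreducible
    ((Ideal.span_singleton_prime (by norm_num)).mpr (by norm_num))
    (monic_reversedQuintic ℤ).isPrimitive (by rw [natDegree_reversedQuintic]; norm_num)

theorem irreducible_reversedQuintic_rat : Irreducible (reversedQuintic ℚ) := by
  have hmap : (reversedQuintic ℤ).map (Int.castRingHom ℚ) = reversedQuintic ℚ := by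
    simp [reversedQuintic, map_ofNat C]
  rw [← hmap, ← IsPrimitive.Int.irreducible_iff_irreducible_map_cast
    (monic_reversedQuintic ℤ).isPrimitive]
  exact irreducible_reversedQuintic_int

theorem neg_mirror_reversedQuintic_rat :
    -(reversedQuintic ℚ).mirror = 552 * X ^ 5 - 828 * X ^ 4 + 322 * X ^ 3 - 23 * X ^ 2 - 1 := by
  have htrailing : (reversedQuintic ℚ).natTrailingDegree = 0 :=
    natTrailingDegree_eq_zero.mpr (Or.inr (by simp [reversedQuintic]))
  have hX : reflect 5 (X : ℚ[X]) = X ^ 4 := by simpa using reflect_monomial (R := ℚ) 5 1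
  rw [mirror, htrailing, pow_zero, mul_one, reverse, natDegree_reversedQuintic, reversedQuintic]
  simp only [reflect_sub, reflect_add, reflect_C_mul, reflect_C, reflect_monomial, hX]
  simp [revAt_le, map_ofNat C]
  ring

open Polynomial in
/-- The polynomial `552X⁵ - 828X⁴ + 322X³ - 23X² - 1` is irreducible over `ℚ`. -/
theorem stmt_13 :
    Irreducible (552 * X^5 - 828 * X^4 + 322 * X^3 - 23 * X^2 - 1 : ℚ[X]) := by
  rw [← neg_mirror_reversedQuintic_rat]
  exact (Associated.refl _).neg_right.irreducible irreducible_reversedQuintic_rat.mirror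
end

section
/- Define g_1(X) = X(1-X) and g_{k+1}(X) = -g_k'(X)·g_1(X). Then each g_k is a polynomial of degree k+1 with k+1 distinct real roots, all lying in [0,1], with smallest root 0 and largest root 1; moreover the interior roots of g_{k+1} strictly interlace those of g_k. -/
section Aux14
open Polynomial

def goodAux14 (g : ℕ → Polynomial ℝ) (k : ℕ) (Zk : ℕ → ℝ) : Prop :=
  (g k).natDegree = k + 1 ∧
  (∀ s t : ℕ, s < t → t ≤ k → Zk s < Zk t) ∧
  Zk 0 = 0 ∧ Zk k = 1 ∧
  (∀ s ≤ k, Zk s ∈ Set.Icc (0:ℝ) 1) ∧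
  (∀ x : ℝ, (g k).IsRoot x ↔ ∃ s ≤ k, Zk s = x)

lemma goodAux14_base (g : ℕ → Polynomial ℝ) (hg1 : g 1 = X * (1 - X)) :
    goodAux14 g 1 (fun s => if s = 0 then (0:ℝ) else 1) := by
  refine ⟨by rw [hg1]; compute_degree!, ?_, by simp, by simp, ?_, ?_⟩
  · intro s t hst ht
    interval_cases t
    · omega
    · interval_cases s <;> norm_num
  · intro s hs; interval_cases s <;> norm_num
  · intro x
    constructor
    · intro hx
      simp only [IsRoot, hg1, eval_mul, eval_X, eval_sub, eval_one, mul_eq_zero,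
        sub_eq_zero] at hx
      rcases hx with h | h
      · exact ⟨0, by omega, by simp [h]⟩
      · exact ⟨1, le_rfl, by simp [h.symm]⟩
    · rintro ⟨s, hs, rfl⟩
      interval_cases s <;> simp [IsRoot, hg1]
lemma goodAux14_step (g : ℕ → Polynomial ℝ)
    (hgrec : ∀ k, 1 ≤ k → g (k+1) = -derivative (g k) * (X * (1 - X)))
    (k : ℕ) (hk : 1 ≤ k) (Zk : ℕ → ℝ) (H : goodAux14 g k Zk) :
    ∃ Zk1, goodAux14 g (k+1) Zk1 ∧
      ∀ s, 1 ≤ s → s ≤ k → Zk1 s ∈ Set.Ioo (Zk (s-1)) (Zk s) := by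
  obtain ⟨hdeg, hmono, hZ0, hZk, hIcc, hroots⟩ := H
  set p := g k with hp
  set d := derivative p with hd
  have hq2 : (X * (1 - X) : ℝ[X]).natDegree = 2 := by compute_degree!
  have hqne : (X * (1 - X) : ℝ[X]) ≠ 0 := fun h => by simp [h] at hq2
  have hpdegpos : 0 < p.natDegree := by omega
  have hddeg : d.degree = (k : ℕ) := by
    rw [hd, degree_derivative_eq p hpdegpos, hdeg]; norm_num
  have hdegd : d.natDegree = k := natDegree_eq_of_degree_eq_some hddeg
  have hdne : d ≠ 0 := by
    intro h; rw [h, degree_zero] at hddeg; exact (by simp at hddeg)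
  -- Rolle
  have key : ∀ s, 1 ≤ s → s ≤ k → ∃ w, w ∈ Set.Ioo (Zk (s-1)) (Zk s) ∧ d.eval w = 0 := by
    intro s hs1 hsk
    have hlt : Zk (s-1) < Zk s := hmono _ _ (by omega) hsk
    have hr1 : p.IsRoot (Zk (s-1)) := (hroots _).mpr ⟨s-1, by omega, rfl⟩
    have hr2 : p.IsRoot (Zk s) := (hroots _).mpr ⟨s, hsk, rfl⟩
    obtain ⟨c, hc, hc0⟩ := exists_deriv_eq_zero hlt
      (p.continuous.continuousOn (s := Set.Icc (Zk (s-1)) (Zk s)))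
      (by rw [hr1, hr2])
    refine ⟨c, hc, ?_⟩
    rw [← Polynomial.deriv]; exact hc0
  choose! w hw hw0 using key
  have hwmono : ∀ s t, 1 ≤ s → s < t → t ≤ k → w s < w t := by
    intro s t hs hst htk
    have h1 := (hw s hs (by omega)).2
    have h2 := (hw t (by omega) htk).1
    have h3 : Zk s ≤ Zk (t-1) := by
      rcases eq_or_lt_of_le (show s ≤ t-1 by omega) with h | h
      · rw [h]
      · exact le_of_lt (hmono _ _ h (by omega))
    linarith
  -- all roots of d are among the w s
  have hinj : Set.InjOn w (Finset.Icc 1 k) := by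
    intro a ha b hb hab
    simp only [Finset.coe_Icc, Set.mem_Icc] at ha hb
    by_contra hne
    rcases lt_or_gt_of_ne hne with h | h
    · exact absurd hab (ne_of_lt (hwmono a b ha.1 h hb.2))
    · exact absurd hab.symm (ne_of_lt (hwmono b a hb.1 h ha.2))
  have hTcard : ((Finset.Icc 1 k).image w).card = k := by
    rw [Finset.card_image_of_injOn hinj, Nat.card_Icc]; omega
  have hTsub : (Finset.Icc 1 k).image w ⊆ d.roots.toFinset := by
    intro x hx
    simp only [Finset.mem_image, Finset.mem_Icc] at hx
    obtain ⟨s, ⟨hs1, hs2⟩, rfl⟩ := hx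
    rw [Multiset.mem_toFinset, mem_roots']
    exact ⟨hdne, hw0 s hs1 hs2⟩
  have hTeq : (Finset.Icc 1 k).image w = d.roots.toFinset := by
    apply Finset.eq_of_subset_of_card_le hTsub
    calc d.roots.toFinset.card ≤ Multiset.card d.roots := Multiset.toFinset_card_le _
      _ ≤ d.natDegree := card_roots' d
      _ = k := hdegd
      _ = _ := hTcard.symm
  have hdroot : ∀ x : ℝ, d.eval x = 0 → ∃ s, 1 ≤ s ∧ s ≤ k ∧ w s = x := by
    intro x hx
    have : x ∈ (Finset.Icc 1 k).image w := by
      rw [hTeq, Multiset.mem_toFinset, mem_roots']; exact ⟨hdne, hx⟩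
    simp only [Finset.mem_image, Finset.mem_Icc] at this
    obtain ⟨s, ⟨h1, h2⟩, h3⟩ := this
    exact ⟨s, h1, h2, h3⟩
  -- bounds
  have hw_pos : ∀ s, 1 ≤ s → s ≤ k → 0 < w s := by
    intro s h1 h2
    have := (hw s h1 h2).1
    have h0 : (0:ℝ) ≤ Zk (s-1) := (hIcc (s-1) (by omega)).1
    linarith
  have hw_lt1 : ∀ s, 1 ≤ s → s ≤ k → w s < 1 := by
    intro s h1 h2
    have := (hw s h1 h2).2
    have h0 : Zk s ≤ 1 := (hIcc s h2).2
    linarith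
  -- define new roots
  set Zk1 : ℕ → ℝ := fun s => if s = 0 then (0:ℝ) else if s ≤ k then w s else 1 with hZk1
  have e0 : Zk1 0 = 0 := by simp [hZk1]
  have es : ∀ s, 1 ≤ s → s ≤ k → Zk1 s = w s := by
    intro s h1 h2
    simp only [hZk1]; rw [if_neg (by omega), if_pos h2]
  have etop : ∀ s, k + 1 ≤ s → Zk1 s = 1 := by
    intro s hs
    simp only [hZk1]; rw [if_neg (by omega), if_neg (by omega)]
  have hg' : g (k+1) = -d * (X * (1 - X)) := hgrec k hk
  have heval : ∀ x : ℝ, (g (k+1)).eval x = -(d.eval x) * (x * (1 - x)) := by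
    intro x; simp [hg']
  have hmono1 : ∀ s t : ℕ, s < t → t ≤ k + 1 → Zk1 s < Zk1 t := by
    intro s t hst htk
    rcases Nat.eq_zero_or_pos s with rfl | hs
    · rw [e0]
      rcases le_or_gt t k with h | h
      · rw [es t (by omega) h]; exact hw_pos t (by omega) h
      · rw [etop t (by omega)]; norm_num
    · have hsk : s ≤ k := by omega
      rw [es s hs hsk]
      rcases le_or_gt t k with h | h
      · rw [es t (by omega) h]; exact hwmono s t hs hst h
      · rw [etop t (by omega)]; exact hw_lt1 s hs hsk
  refine ⟨Zk1, ⟨?_, hmono1, e0, etop (k+1) le_rfl, ?_, ?_⟩, ?_⟩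
  · -- degree
    rw [hg', natDegree_mul (neg_ne_zero.mpr hdne) hqne, natDegree_neg, hdegd, hq2]
  · -- Icc
    intro s hs
    rcases Nat.eq_zero_or_pos s with rfl | h1
    · rw [e0]; exact ⟨le_rfl, zero_le_one⟩
    · rcases le_or_gt s k with h2 | h2
      · rw [es s h1 h2]
        exact ⟨le_of_lt (hw_pos s h1 h2), le_of_lt (hw_lt1 s h1 h2)⟩
      · rw [etop s (by omega)]; exact ⟨zero_le_one, le_rfl⟩
  · -- roots characterization
    intro x
    constructor
    · intro hx
      rw [IsRoot, heval] at hx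
      rcases mul_eq_zero.mp hx with h | h
      · obtain ⟨s, h1, h2, h3⟩ := hdroot x (by linarith [neg_eq_zero.mp h])
        exact ⟨s, by omega, by rw [es s h1 h2]; exact h3⟩
      · rcases mul_eq_zero.mp h with h | h
        · exact ⟨0, by omega, by rw [e0, h]⟩
        · exact ⟨k+1, le_rfl, by rw [etop (k+1) le_rfl]; linarith⟩
    · rintro ⟨s, hs, rfl⟩
      rw [IsRoot, heval]
      rcases Nat.eq_zero_or_pos s with rfl | h1
      · rw [e0]; ring
      · rcases le_or_gt s k with h2 | h2
        · rw [es s h1 h2, hw0 s h1 h2]; ring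
        · rw [etop s (by omega)]; ring
  · -- interlacing
    intro s h1 h2
    rw [es s h1 h2]; exact hw s h1 h2

noncomputable def Faux14 (g : ℕ → Polynomial ℝ)
    (hg1 : g 1 = X * (1 - X))
    (hgrec : ∀ k, 1 ≤ k → g (k+1) = -derivative (g k) * (X * (1 - X))) :
    ∀ n : ℕ, {p : (ℕ → ℝ) × (ℕ → ℝ) //
      goodAux14 g (n+1) p.1 ∧ goodAux14 g (n+2) p.2 ∧
      ∀ s, 1 ≤ s → s ≤ n+1 → p.2 s ∈ Set.Ioo (p.1 (s-1)) (p.1 s)}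
  | 0 =>
    have h1 : goodAux14 g 1 (fun s => if s = 0 then (0:ℝ) else 1) :=
      goodAux14_base g hg1
    have h2 := goodAux14_step g hgrec 1 le_rfl _ h1
    ⟨((fun s => if s = 0 then (0:ℝ) else 1), h2.choose),
      h1, h2.choose_spec.1, h2.choose_spec.2⟩
  | n+1 =>
    have prev := Faux14 g hg1 hgrec n
    have h2 := goodAux14_step g hgrec (n+2) (by omega) prev.1.2 prev.2.2.1
    ⟨(prev.1.2, h2.choose), prev.2.2.1, h2.choose_spec.1, h2.choose_spec.2⟩

lemma Faux14_succ_fst (g : ℕ → Polynomial ℝ) (hg1) (hgrec) (n : ℕ) :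
    (Faux14 g hg1 hgrec (n+1)).1.1 = (Faux14 g hg1 hgrec n).1.2 := rfl


end Aux14

open Polynomial in
/-- With `g₁ = X(1-X)` and `g_{k+1} = -g_k'·g₁`, each `g_k` is a polynomial of
degree `k+1` having `k+1` distinct real roots `0 = Z_{0:k} < … < Z_{k:k} = 1`,
all in `[0,1]`; moreover the interior roots of `g_{k+1}` strictly interlace
those of `g_k`: `Z_{s:k+1} ∈ (Z_{s-1:k}, Z_{s:k})` for `s = 1,…,k`. -/
theorem stmt_14 (g : ℕ → Polynomial ℝ)
    (hg1 : g 1 = X * (1 - X))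
    (hgrec : ∀ k, 1 ≤ k → g (k+1) = -derivative (g k) * (X * (1 - X))) :
    ∃ Z : ℕ → ℕ → ℝ, ∀ k, 1 ≤ k →
      (g k).natDegree = k + 1 ∧
      (∀ s t : ℕ, s < t → t ≤ k → Z k s < Z k t) ∧
      Z k 0 = 0 ∧ Z k k = 1 ∧
      (∀ s ≤ k, Z k s ∈ Set.Icc (0:ℝ) 1) ∧
      (∀ x : ℝ, (g k).IsRoot x ↔ ∃ s ≤ k, Z k s = x) ∧
      (∀ s, 1 ≤ s → s ≤ k → Z (k+1) s ∈ Set.Ioo (Z k (s-1)) (Z k s)) := by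
  refine ⟨fun m => if h : m = 0 then (fun _ => 0) else (Faux14 g hg1 hgrec (m-1)).1.1, ?_⟩
  intro k hk
  obtain ⟨n, rfl⟩ : ∃ n, k = n + 1 := ⟨k - 1, by omega⟩
  obtain ⟨h1, h2, h3⟩ := (Faux14 g hg1 hgrec n).2
  obtain ⟨hdeg, hmono, hZ0, hZk, hIcc, hroots⟩ := h1
  have e1 : (fun m => if h : m = 0 then (fun _ => (0:ℝ)) else (Faux14 g hg1 hgrec (m-1)).1.1) (n+1)
      = (Faux14 g hg1 hgrec n).1.1 := by simp
  have e2 : (fun m => if h : m = 0 then (fun _ => (0:ℝ)) else (Faux14 g hg1 hgrec (m-1)).1.1) (n+1+1)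
      = (Faux14 g hg1 hgrec n).1.2 := by
    simp [Faux14_succ_fst]
  simp only [e1, e2]
  exact ⟨hdeg, hmono, hZ0, hZk, hIcc, hroots, h3⟩
end

section
/- If g : [0,1] → ℝ is T-times monotone (i.e., (-1)^k g^{(k)}(X) ≥ 0 for all X ∈ [0,1] and k ≤ T) with g ≥ 0 on [0,1], and f_T(X) = X, f_{t-1}(X) = f_t(X) - n_t·f_t'(X)·g(X) for positive reals n_t, then each f_t is strictly increasing on [0,1] with f_t'(X) ≥ 1 for all X ∈ [0,1]. -/
/-!
Write `h_t = f_t'`, so that the recursion reads `h_{t-1} = h_t + n_t · (-(h_t g)')`. Call `φ`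
`m`-times monotone when `(-1)^k φ⁽ᵏ⁾ ≥ 0` for `k ≤ m`. By the Leibniz rule this class is closed
under products, and `-φ'` is `m`-times monotone when `φ` is `(m+1)`-times monotone. Going down
from `h_T = 1`, each `h_t` is therefore `t`-times monotone, and `h_{t-1} ≥ h_t ≥ 1` because
`-(h_t g)' ≥ 0`.
-/

open Set

def TimesMonotoneOn (m : ℕ) (φ : ℝ → ℝ) (s : Set ℝ) : Prop :=
  ∀ k ≤ m, ∀ x ∈ s, 0 ≤ (-1) ^ k * iteratedDeriv k φ x

namespace TimesMonotoneOn

variable {m : ℕ} {φ ψ : ℝ → ℝ} {s : Set ℝ}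

theorem mono {k : ℕ} (h : TimesMonotoneOn m φ s) (hkm : k ≤ m) : TimesMonotoneOn k φ s :=
  fun j hj => h j (hj.trans hkm)

theorem nonneg (h : TimesMonotoneOn m φ s) {x : ℝ} (hx : x ∈ s) : 0 ≤ φ x := by
  simpa using h 0 m.zero_le x hx

theorem neg_deriv (h : TimesMonotoneOn (m + 1) φ s) : TimesMonotoneOn m (-deriv φ) s := by
  intro k hk x hx
  have := h (k + 1) (by omega) x hx
  rw [iteratedDeriv_neg, ← iteratedDeriv_succ']
  linear_combination this

theorem const_mul {c : ℝ} (hc : 0 ≤ c) (h : TimesMonotoneOn m φ s) :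
    TimesMonotoneOn m (fun x => c * φ x) s := by
  intro k hk x hx
  rw [iteratedDeriv_const_mul_field, mul_left_comm]
  exact mul_nonneg hc (h k hk x hx)

theorem add (hφ : ContDiff ℝ m φ) (hψ : ContDiff ℝ m ψ) (hφs : TimesMonotoneOn m φ s)
    (hψs : TimesMonotoneOn m ψ s) : TimesMonotoneOn m (φ + ψ) s := by
  intro k hk x hx
  rw [iteratedDeriv_add ((hφ.of_le (by exact_mod_cast hk)).contDiffAt)
    ((hψ.of_le (by exact_mod_cast hk)).contDiffAt), mul_add]
  exact add_nonneg (hφs k hk x hx) (hψs k hk x hx)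

theorem mul (hφ : ContDiff ℝ m φ) (hψ : ContDiff ℝ m ψ) (hφs : TimesMonotoneOn m φ s)
    (hψs : TimesMonotoneOn m ψ s) : TimesMonotoneOn m (φ * ψ) s := by
  intro k hk x hx
  rw [iteratedDeriv_mul ((hφ.of_le (by exact_mod_cast hk)).contDiffAt)
    ((hψ.of_le (by exact_mod_cast hk)).contDiffAt), Finset.mul_sum]
  refine Finset.sum_nonneg fun i hi => ?_
  have hik : i ≤ k := Nat.lt_succ_iff.mp (Finset.mem_range.mp hi)
  have hsplit : (-1 : ℝ) ^ k = (-1) ^ i * (-1) ^ (k - i) := by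
    rw [← pow_add, Nat.add_sub_cancel' hik]
  calc (0 : ℝ) ≤ k.choose i * (((-1) ^ i * iteratedDeriv i φ x) *
        ((-1) ^ (k - i) * iteratedDeriv (k - i) ψ x)) := by
        have := hφs i (hik.trans hk) x hx
        have := hψs (k - i) ((k.sub_le i).trans hk) x hx
        positivity
    _ = _ := by rw [hsplit]; ring

end TimesMonotoneOn

theorem timesMonotoneOn_const {m : ℕ} {c : ℝ} {s : Set ℝ} (hc : 0 ≤ c) :
    TimesMonotoneOn m (fun _ => c) s := by
  intro k _ x _
  rcases k with _ | k
  · simpa using hc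
  · simp [iteratedDeriv_const]

theorem deriv_sub_const_mul_deriv_mul {F g : ℝ → ℝ} (hF : ContDiff ℝ 2 F)
    (hg : Differentiable ℝ g) (c : ℝ) :
    deriv (fun x => F x - c * deriv F x * g x) =
      deriv F + fun x => c * (-deriv (deriv F * g)) x := by
  have hF' : Differentiable ℝ (deriv F) := (hF.deriv' (n := 1)).differentiable one_ne_zero
  ext x
  have hprod : DifferentiableAt ℝ (fun y => deriv F y * g y) x := (hF' x).mul (hg x)
  simp only [mul_assoc]
  rw [deriv_fun_sub ((hF.differentiable two_ne_zero) x) (hprod.const_mul c),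
    deriv_const_mul c hprod]
  simp only [Pi.add_apply, Pi.neg_apply]
  rw [← Pi.mul_def]
  ring

section RecursionStep

variable {m : ℕ} {F g : ℝ → ℝ} {c : ℝ} {s : Set ℝ}

theorem TimesMonotoneOn.neg_deriv_deriv_mul (hF : ContDiff ℝ (m + 1 + 1) F)
    (hg : ContDiff ℝ (m + 1) g) (hFs : TimesMonotoneOn (m + 1) (deriv F) s)
    (hgs : TimesMonotoneOn (m + 1) g s) :
    TimesMonotoneOn m (-deriv (deriv F * g)) s :=
  (hFs.mul hF.deriv' hg hgs).neg_deriv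

theorem TimesMonotoneOn.deriv_sub_const_mul_deriv_mul (hc : 0 ≤ c)
    (hF : ContDiff ℝ (m + 1 + 1) F) (hg : ContDiff ℝ (m + 1) g)
    (hFs : TimesMonotoneOn (m + 1) (deriv F) s)
    (hgs : TimesMonotoneOn (m + 1) g s) :
    TimesMonotoneOn m (deriv fun x => F x - c * deriv F x * g x) s := by
  rw [_root_.deriv_sub_const_mul_deriv_mul
    (hF.of_le (by exact_mod_cast (by omega : 2 ≤ m + 1 + 1))) (hg.differentiable (by simp))]
  refine (hFs.mono m.le_succ).add (hF.deriv'.of_le (by simp)) ?_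
    ((hFs.neg_deriv_deriv_mul hF hg hgs).const_mul hc)
  exact contDiff_const.mul (hF.deriv'.mul hg).deriv'.neg

theorem deriv_le_deriv_sub_const_mul_deriv_mul (hc : 0 ≤ c) (hF : ContDiff ℝ (m + 1 + 1) F)
    (hg : ContDiff ℝ (m + 1) g) (hFs : TimesMonotoneOn (m + 1) (deriv F) s)
    (hgs : TimesMonotoneOn (m + 1) g s) {x : ℝ} (hx : x ∈ s) :
    deriv F x ≤ deriv (fun x => F x - c * deriv F x * g x) x := by
  rw [deriv_sub_const_mul_deriv_mul (hF.of_le (by exact_mod_cast (by omega : 2 ≤ m + 1 + 1)))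
    (hg.differentiable (by simp))]
  have := (hFs.neg_deriv_deriv_mul hF hg hgs).nonneg hx
  simp only [Pi.add_apply]
  nlinarith

end RecursionStep

theorem contDiff_timesMonotoneOn_one_le_deriv_of_recursion {T : ℕ} {g : ℝ → ℝ} {s : Set ℝ}
    (hg : ContDiff ℝ T g) (hgs : TimesMonotoneOn T g s) {n : ℕ → ℝ}
    (hn : ∀ t, 1 ≤ t → t ≤ T → 0 < n t) {f : ℕ → ℝ → ℝ} (hT : ∀ X, f T X = X)
    (hrec : ∀ t, 1 ≤ t → t ≤ T → ∀ X, f (t - 1) X = f t X - n t * deriv (f t) X * g X)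
    {t : ℕ} (ht : t ≤ T) :
    ContDiff ℝ (t + 1) (f t) ∧ TimesMonotoneOn t (deriv (f t)) s ∧
      ∀ x ∈ s, 1 ≤ deriv (f t) x := by
  induction ht using Nat.decreasingInduction with
  | self =>
    rw [show f T = id from funext hT, deriv_id']
    exact ⟨contDiff_id, timesMonotoneOn_const zero_le_one, fun _ _ => le_rfl⟩
  | of_succ k hk ih =>
    obtain ⟨hC, hM, hge⟩ := ih
    have hF : ContDiff ℝ (k + 1 + 1) (f (k + 1)) := by exact_mod_cast hC
    have hgk : ContDiff ℝ (k + 1) g := hg.of_le (by exact_mod_cast hk)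
    have hgsk : TimesMonotoneOn (k + 1) g s := hgs.mono hk
    have hc : 0 ≤ n (k + 1) := (hn (k + 1) (Nat.le_add_left 1 k) hk).le
    rw [show f k = fun X => f (k + 1) X - n (k + 1) * deriv (f (k + 1)) X * g X from
      funext (hrec (k + 1) (Nat.le_add_left 1 k) hk)]
    refine ⟨(hF.of_le le_self_add).sub ((contDiff_const.mul hF.deriv').mul hgk),
      hM.deriv_sub_const_mul_deriv_mul hc hF hgk hgsk,
      fun x hx => (hge x hx).trans (deriv_le_deriv_sub_const_mul_deriv_mul hc hF hgk hM hgsk hx)⟩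

theorem stmt_15_general (T : ℕ) (g : ℝ → ℝ) (hg : ContDiff ℝ ((T : ℕ) : ℕ∞) g)
    (hmon : ∀ k ≤ T, ∀ X ∈ Set.Icc (0:ℝ) 1, 0 ≤ (-1)^k * iteratedDeriv k g X)
    (n : ℕ → ℝ) (hn : ∀ t, 1 ≤ t → t ≤ T → 0 < n t)
    (f : ℕ → ℝ → ℝ) (hT : ∀ X : ℝ, f T X = X)
    (hrec : ∀ t, 1 ≤ t → t ≤ T → ∀ X : ℝ,
      f (t-1) X = f t X - n t * deriv (f t) X * g X)
    (t : ℕ) (ht : t ≤ T) :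
    StrictMonoOn (f t) (Set.Icc (0:ℝ) 1) ∧
    ∀ X ∈ Set.Icc (0:ℝ) 1, 1 ≤ deriv (f t) X := by
  obtain ⟨hC, -, hge⟩ :=
    contDiff_timesMonotoneOn_one_le_deriv_of_recursion (s := Icc 0 1) (by exact_mod_cast hg) hmon
      hn hT hrec ht
  exact ⟨strictMonoOn_of_deriv_pos (convex_Icc 0 1) hC.continuous.continuousOn
    fun x hx => one_pos.trans_le (hge x (interior_subset hx)), hge⟩

/-- If `g` is `T`-times monotone on `[0,1]` (i.e. `(-1)^k·g⁽ᵏ⁾ ≥ 0` there for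
all `k ≤ T`) and nonnegative on `[0,1]`, then with `f_T(X) = X`,
`f_{t-1}(X) = f_t(X) - n_t·f_t'(X)·g(X)` (with `n_t > 0`), each `f_t` is
strictly increasing on `[0,1]` with `f_t' ≥ 1` on `[0,1]`. -/
theorem stmt_15 (T : ℕ) (g : ℝ → ℝ) (hg : ContDiff ℝ ((T : ℕ) : ℕ∞) g)
    (hmon : ∀ k ≤ T, ∀ X ∈ Set.Icc (0:ℝ) 1, 0 ≤ (-1)^k * iteratedDeriv k g X)
    (hpos : ∀ X ∈ Set.Icc (0:ℝ) 1, 0 ≤ g X)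
    (n : ℕ → ℝ) (hn : ∀ t, 1 ≤ t → t ≤ T → 0 < n t)
    (f : ℕ → ℝ → ℝ) (hT : ∀ X : ℝ, f T X = X)
    (hrec : ∀ t, 1 ≤ t → t ≤ T → ∀ X : ℝ,
      f (t-1) X = f t X - n t * deriv (f t) X * g X)
    (t : ℕ) (ht : t ≤ T) :
    StrictMonoOn (f t) (Set.Icc (0:ℝ) 1) ∧
    ∀ X ∈ Set.Icc (0:ℝ) 1, 1 ≤ deriv (f t) X :=
  stmt_15_general T g hg hmon n hn f hT hrec t ht
end
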